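/- Let d ≥ 1, n ≥ 1 and let a_1, …, a_n ∈ ℕ^d \ {0} generate an additive submonoid Γ of ℕ^d with the property that for every m ∈ ℕ^d there exists an integer k ≥ 1 with k•m ∈ Γ. In R = ℂ[[x_1,…,x_d,y_1,…,y_d]] let I_Δ be the ideal generated by x^{a_1} − y^{a_1}, …, x^{a_n} − y^{a_n}, and define Γ^s = { α ∈ ℕ^d : x^α − y^α is integral over I_Δ }. Then Γ^s is an additive submonoid of ℕ^d containing Γ, and Γ^s is finitely generated. -/

import Mathlib

/-!
An element `f` is integral over `I` exactly when `f t` is integral over the Rees algebra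
`R[I t]`, so the elements integral over `I` form an ideal `Ī ⊇ I`. Since
`x^(α+β) - y^(α+β) = x^α (x^β - y^β) + y^β (x^α - y^α)`, the exponents `α` with
`x^α - y^α ∈ Ī` form a submonoid `Γˢ ⊇ Γ`. By hypothesis `Γˢ` contains `N eᵢ` for some
`N > 0` and every `i`. Then `Γˢ` is generated by the `N eᵢ` together with the minimal elements
of `Γˢ` in each of the finitely many residue classes modulo `N`, and by Dickson's lemma there
are finitely many of those.
-/

/-- An element `f` of a commutative ring is *integral over the ideal* `I` if it satisfies an
equation `f ^ m + a 1 * f ^ (m-1) + ⋯ + a (m-1) * f + a m = 0` with `a j ∈ I ^ j`. -/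
def IsIntegralOverIdeal {R : Type*} [CommRing R] (I : Ideal R) (f : R) : Prop :=
  ∃ m : ℕ, 0 < m ∧ ∃ a : ℕ → R, (∀ j, 1 ≤ j → j ≤ m → a j ∈ I ^ j) ∧
    f ^ m + ∑ j ∈ Finset.Icc 1 m, a j * f ^ (m - j) = 0

/-- The monomial `x ^ α` in `ℂ[[x_1,…,x_d,y_1,…,y_d]]`, the `x`-variables being indexed by
the left summand of `Fin d ⊕ Fin d`. -/
noncomputable def Xmon (d : ℕ) (α : Fin d →₀ ℕ) : MvPowerSeries (Fin d ⊕ Fin d) ℂ :=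
  MvPowerSeries.monomial (α.embDomain (Function.Embedding.inl)) 1

/-- The monomial `y ^ α` in `ℂ[[x_1,…,x_d,y_1,…,y_d]]`. -/
noncomputable def Ymon (d : ℕ) (α : Fin d →₀ ℕ) : MvPowerSeries (Fin d ⊕ Fin d) ℂ :=
  MvPowerSeries.monomial (α.embDomain (Function.Embedding.inr)) 1

open Polynomial

section IntegralOverIdeal

variable {R : Type*} [CommRing R] {I : Ideal R} {f : R}

lemma coeff_eval_C_mul_X (P : R[X][X]) (f : R) {m : ℕ} (hP : P.natDegree ≤ m) :
    (P.eval (C f * X)).coeff m =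
      ∑ k ∈ Finset.range (m + 1), (P.coeff k).coeff (m - k) * f ^ k := by
  rw [eval_eq_sum_range' (Nat.lt_succ_of_le hP), finsetSum_coeff]
  refine Finset.sum_congr rfl fun k hk => ?_
  rw [mul_pow, ← C_pow, ← mul_assoc, coeff_mul_X_pow',
    if_pos (Nat.lt_succ_iff.1 (Finset.mem_range.1 hk)), coeff_mul_C]

theorem IsIntegralOverIdeal.isIntegral_C_mul_X (h : IsIntegralOverIdeal I f) :
    IsIntegral (reesAlgebra I) (C f * X) := by
  obtain ⟨m, hm, a, ha, heq⟩ := h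
  set P : R[X][X] := X ^ m + ∑ j ∈ Finset.Icc 1 m, C (monomial j (a j)) * X ^ (m - j)
  have hlifts : P ∈ lifts (algebraMap (reesAlgebra I) R[X]) := by
    refine add_mem (X_pow_mem_lifts _ _) (sum_mem fun j hj => mul_mem ?_ (X_pow_mem_lifts _ _))
    rw [Finset.mem_Icc] at hj
    exact C_mem_lifts _ (⟨_, reesAlgebra.monomial_mem.2 (ha j hj.1 hj.2)⟩ : reesAlgebra I)
  have hmonic : P.Monic := by
    refine monic_X_pow_add <| (degree_sum_le _ _).trans_lt <|
      (Finset.sup_lt_iff (WithBot.bot_lt_coe m)).2 fun j hj =>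
        (degree_C_mul_X_pow_le _ _).trans_lt ?_
    rw [Finset.mem_Icc] at hj
    exact WithBot.coe_lt_coe.2 (Nat.sub_lt hm hj.1)
  obtain ⟨q, hq, -, hqm⟩ := lifts_and_natDegree_eq_and_monic hlifts hmonic
  refine ⟨q, hqm, ?_⟩
  rw [eval₂_eq_eval_map, hq]
  calc P.eval (C f * X) = C (f ^ m + ∑ j ∈ Finset.Icc 1 m, a j * f ^ (m - j)) * X ^ m := by
        simp only [P, eval_add, eval_pow, eval_X, eval_finsetSum, eval_mul, eval_C, C_add, add_mul,
          map_sum, Finset.sum_mul]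
        refine congrArg₂ (· + ·) (by rw [mul_pow, C_pow]) (Finset.sum_congr rfl fun j hj => ?_)
        rw [Finset.mem_Icc] at hj
        rw [← C_mul_X_pow_eq_monomial, mul_pow, ← C_pow, C_mul]
        calc C (a j) * X ^ j * (C (f ^ (m - j)) * X ^ (m - j))
            = C (a j) * C (f ^ (m - j)) * (X ^ j * X ^ (m - j)) := by ring
          _ = C (a j) * C (f ^ (m - j)) * X ^ m := by rw [← pow_add, Nat.add_sub_cancel' hj.2]
    _ = 0 := by rw [heq, C_0, zero_mul]

theorem IsIntegralOverIdeal.of_isIntegral_C_mul_X [Nontrivial R]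
    (h : IsIntegral (reesAlgebra I) (C f * X)) : IsIntegralOverIdeal I f := by
  obtain ⟨q, hq, hq0⟩ := h
  set P := q.map (algebraMap (reesAlgebra I) R[X])
  set m := q.natDegree
  have hPm : P.natDegree = m := hq.natDegree_map _
  have hm : 0 < m := hq.natDegree_pos.2 (by rintro rfl; simp at hq0)
  have hlead : (P.coeff m).coeff 0 = 1 := by
    rw [← hPm, (hq.map _).coeff_natDegree, coeff_one_zero]
  refine ⟨m, hm, fun j => (P.coeff (m - j)).coeff j, fun j _ _ => ?_, ?_⟩
  · exact (mem_reesAlgebra_iff I _).1 (by rw [coeff_map]; exact (q.coeff (m - j)).2) j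
  -- the coefficient of `X ^ m` in `P.eval (C f * X) = 0` is the equation, read backwards
  · have hsum := coeff_eval_C_mul_X P f hPm.le
    rw [← eval₂_eq_eval_map, hq0, coeff_zero, Finset.sum_range_succ, Nat.sub_self, hlead,
      one_mul] at hsum
    rw [hsum, add_comm]
    congr 1
    refine Finset.sum_nbij' (m - ·) (m - ·) ?_ ?_ ?_ ?_ fun j hj => ?_ <;>
      simp only [Finset.mem_Icc, Finset.mem_range] at * <;> try omega
    rw [Nat.sub_sub_self hj.2]

theorem isIntegralOverIdeal_iff_isIntegral_C_mul_X [Nontrivial R] :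
    IsIntegralOverIdeal I f ↔ IsIntegral (reesAlgebra I) (C f * X) :=
  ⟨IsIntegralOverIdeal.isIntegral_C_mul_X, IsIntegralOverIdeal.of_isIntegral_C_mul_X⟩

theorem isIntegralOverIdeal_of_mem (h : f ∈ I) : IsIntegralOverIdeal I f := by
  refine ⟨1, one_pos, fun _ => -f, fun j hj1 hj2 => ?_, by simp⟩
  obtain rfl : j = 1 := le_antisymm hj2 hj1
  simpa using I.neg_mem h

variable (I) in
def Ideal.integralClosure [Nontrivial R] : Ideal R where
  carrier := {f | IsIntegralOverIdeal I f}
  zero_mem' := isIntegralOverIdeal_of_mem I.zero_mem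
  add_mem' {f g} hf hg := by
    simp only [Set.mem_ofPred_eq, isIntegralOverIdeal_iff_isIntegral_C_mul_X, C_add, add_mul] at *
    exact hf.add hg
  smul_mem' r f hf := by
    simp only [Set.mem_ofPred_eq, isIntegralOverIdeal_iff_isIntegral_C_mul_X, smul_eq_mul, C_mul,
      mul_assoc] at *
    exact (isIntegral_algebraMap
      (x := (⟨C r, (reesAlgebra I).algebraMap_mem r⟩ : reesAlgebra I))).mul hf

theorem Ideal.le_integralClosure [Nontrivial R] : I ≤ I.integralClosure :=
  fun _ => isIntegralOverIdeal_of_mem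

end IntegralOverIdeal

section Binomial

variable {d : ℕ}

theorem Xmon_add (α β : Fin d →₀ ℕ) : Xmon d (α + β) = Xmon d α * Xmon d β := by
  rw [Xmon, Xmon, Xmon, MvPowerSeries.monomial_mul_monomial, Finsupp.embDomain_add, one_mul]

theorem Ymon_add (α β : Fin d →₀ ℕ) : Ymon d (α + β) = Ymon d α * Ymon d β := by
  rw [Ymon, Ymon, Ymon, MvPowerSeries.monomial_mul_monomial, Finsupp.embDomain_add, one_mul]

theorem Xmon_zero_sub_Ymon_zero : Xmon d 0 - Ymon d 0 = 0 := by
  simp [Xmon, Ymon]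

def binomialExponents (J : Ideal (MvPowerSeries (Fin d ⊕ Fin d) ℂ)) :
    AddSubmonoid (Fin d →₀ ℕ) where
  carrier := {α | Xmon d α - Ymon d α ∈ J}
  zero_mem' := by simp [Xmon_zero_sub_Ymon_zero]
  add_mem' {α β} hα hβ := by
    have key : Xmon d (α + β) - Ymon d (α + β) =
        Xmon d α * (Xmon d β - Ymon d β) + Ymon d β * (Xmon d α - Ymon d α) := by
      rw [Xmon_add, Ymon_add]
      ring
    rw [Set.mem_ofPred_eq, key]
    exact J.add_mem (J.mul_mem_left _ hβ) (J.mul_mem_left _ hα)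

end Binomial

namespace AddSubmonoid

variable {σ : Type*}

theorem mem_closure_range_nsmul_single {N : ℕ} {v : σ →₀ ℕ} (hv : ∀ i, N ∣ v i) :
    v ∈ closure (Set.range fun i => N • Finsupp.single i 1) := by
  rw [← v.sum_single]
  refine AddSubmonoidClass.finsuppSum_mem _ _ _ fun i _ => ?_
  obtain ⟨k, hk⟩ := hv i
  rw [hk, show Finsupp.single i (N * k) = k • N • Finsupp.single i 1 by
    simp [Finsupp.smul_single, mul_comm]]
  exact nsmul_mem (subset_closure (Set.mem_range_self i)) k

variable [Finite σ]

theorem fg_of_nsmul_single_mem (S : AddSubmonoid (σ →₀ ℕ)) (N : ℕ) [NeZero N]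
    (h : ∀ i, N • Finsupp.single i 1 ∈ S) : S.FG := by
  let residue (s : σ →₀ ℕ) : σ → ZMod N := fun i => s i
  let G := ⋃ r, {m | Minimal (fun t => t ∈ S ∧ residue t = r) m}
  have hG : G.Finite := Set.finite_iUnion fun r =>
    WellQuasiOrderedLE.finite_of_isAntichain (setOfPred_minimal_antichain _)
  refine (fg_iff S).2 ⟨G ∪ Set.range fun i => N • Finsupp.single i 1,
    le_antisymm ?_ fun s hs => ?_, hG.union (Set.finite_range _)⟩
  · rw [closure_le]
    rintro _ (⟨_, ⟨r, rfl⟩, hm⟩ | ⟨i, rfl⟩)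
    exacts [hm.1.1, h i]
  · obtain ⟨m, hms, hm⟩ :=
      exists_minimal_le_of_wellFoundedLT (fun t => t ∈ S ∧ residue t = residue s) s
        ⟨hs, rfl⟩
    rw [← add_tsub_cancel_of_le hms]
    refine add_mem (subset_closure (Or.inl (Set.mem_iUnion.2 ⟨_, hm⟩)))
      (closure_mono Set.subset_union_right (mem_closure_range_nsmul_single fun i => ?_))
    rw [Finsupp.tsub_apply, ← ZMod.natCast_eq_zero_iff,
      Nat.cast_sub (Finsupp.le_def.1 hms i), sub_eq_zero]
    exact congrFun hm.prop.2.symm i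

theorem fg_of_forall_exists_nsmul_single_mem (S : AddSubmonoid (σ →₀ ℕ))
    (h : ∀ i, ∃ k, 0 < k ∧ k • Finsupp.single i 1 ∈ S) : S.FG := by
  have := Fintype.ofFinite σ
  choose k hk hkS using h
  have : NeZero (∏ i, k i) := ⟨(Finset.prod_pos fun i _ => hk i).ne'⟩
  refine fg_of_nsmul_single_mem S (∏ i, k i) fun i => ?_
  obtain ⟨c, hc⟩ := Finset.dvd_prod_of_mem k (Finset.mem_univ i)
  rw [hc, mul_comm, mul_smul]
  exact nsmul_mem (hkS i) c

end AddSubmonoid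

theorem saturation_semigroup_fg_general (d n : ℕ)
    (a : Fin n → (Fin d →₀ ℕ))
    (hsat : ∀ m : Fin d →₀ ℕ, ∃ k : ℕ, 1 ≤ k ∧
      k • m ∈ AddSubmonoid.closure (Set.range a))
    (IΔ : Ideal (MvPowerSeries (Fin d ⊕ Fin d) ℂ))
    (hIΔ : IΔ = Ideal.span (Set.range fun i => Xmon d (a i) - Ymon d (a i))) :
    ∃ Γs : AddSubmonoid (Fin d →₀ ℕ),
      (↑Γs = {α : Fin d →₀ ℕ | IsIntegralOverIdeal IΔ (Xmon d α - Ymon d α)}) ∧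
      AddSubmonoid.closure (Set.range a) ≤ Γs ∧ Γs.FG := by
  have hΓ : AddSubmonoid.closure (Set.range a) ≤ binomialExponents IΔ.integralClosure := by
    rw [AddSubmonoid.closure_le, Set.range_subset_iff, hIΔ]
    exact fun i => Ideal.le_integralClosure (Ideal.subset_span (Set.mem_range_self i))
  refine ⟨binomialExponents IΔ.integralClosure, rfl, hΓ, ?_⟩
  exact AddSubmonoid.fg_of_forall_exists_nsmul_single_mem _ fun i =>
    (hsat (Finsupp.single i 1)).imp fun _ hk => ⟨hk.1, hΓ hk.2⟩

/-- Let `Γ ⊆ ℕ^d` be the submonoid generated by `a_1, …, a_n ∈ ℕ^d \ {0}`, and suppose every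
`m ∈ ℕ^d` has a multiple `k • m ∈ Γ` with `k ≥ 1` (smooth normalization).  Let
`I_Δ = ⟨x^{a_i} - y^{a_i} : 1 ≤ i ≤ n⟩` in `ℂ[[x_1,…,x_d,y_1,…,y_d]]`.  Then
`Γ^s = { α : x^α - y^α is integral over I_Δ }` is a submonoid of `ℕ^d` containing `Γ`,
and `Γ^s` is finitely generated. -/
theorem saturation_semigroup_fg (d n : ℕ) (hd : 1 ≤ d) (hn : 1 ≤ n)
    (a : Fin n → (Fin d →₀ ℕ)) (ha : ∀ i, a i ≠ 0)
    (hsat : ∀ m : Fin d →₀ ℕ, ∃ k : ℕ, 1 ≤ k ∧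
      k • m ∈ AddSubmonoid.closure (Set.range a))
    (IΔ : Ideal (MvPowerSeries (Fin d ⊕ Fin d) ℂ))
    (hIΔ : IΔ = Ideal.span (Set.range fun i => Xmon d (a i) - Ymon d (a i))) :
    ∃ Γs : AddSubmonoid (Fin d →₀ ℕ),
      (↑Γs = {α : Fin d →₀ ℕ | IsIntegralOverIdeal IΔ (Xmon d α - Ymon d α)}) ∧
      AddSubmonoid.closure (Set.range a) ≤ Γs ∧ Γs.FG :=
  saturation_semigroup_fg_general d n a hsat IΔ hIΔ
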